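/- arXiv:1112.4541 — 2 statements merged into one kernel-verified Lean document; each statement's English description precedes it below -/
import Mathlib

section
/- With the same RIFS setup, the typical Hausdorff dimension of the random attractor is infimal: the set $\{\omega \in \Omega : \dim_H F_\omega = \inf_{u \in \Omega} \dim_H F_u\}$ is residual in $(\Omega, d_\Omega)$. -/
open Metric MeasureTheory Filter Set
open scoped ENNReal NNReal

/-- The level-`k` approximation of the random attractor: the union over all length-`k`
words `(i₁,…,i_k)` with `i_l ∈ 𝓘_{ω_l}` of `S_{ω₁,i₁} ∘ ⋯ ∘ S_{ω_k,i_k}(K₀)`. -/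
def levelSets {X : Type*} {N : ℕ} (m : Fin N → ℕ) (S : ∀ i, Fin (m i) → X → X) (K₀ : Set X) :
    (ℕ → Fin N) → ℕ → Set X
  | _, 0 => K₀
  | ω, k+1 => ⋃ j : Fin (m (ω 0)), S (ω 0) j '' levelSets m S K₀ (fun n => ω (n+1)) k

/-- The random attractor `F_ω = ⋂_k ⋃_{i₁,…,i_k} S_{ω₁,i₁} ∘ ⋯ ∘ S_{ω_k,i_k}(K₀)`. -/
def attractorOf {X : Type*} {N : ℕ} (m : Fin N → ℕ) (S : ∀ i, Fin (m i) → X → X)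
    (K₀ : Set X) (ω : ℕ → Fin N) : Set X :=
  ⋂ k, levelSets m S K₀ ω k

/-- `φ` is a bi-Lipschitz contraction. -/
def IsBiLipContraction {K : Type*} [MetricSpace K] (φ : K → K) : Prop :=
  ∃ c C : ℝ, 0 < c ∧ C < 1 ∧
    ∀ x y, c * dist x y ≤ dist (φ x) (φ y) ∧ dist (φ x) (φ y) ≤ C * dist x y


/-! For `d > 0` the Hausdorff content `H^d_∞` has the same null sets as `μH[d]` and, unlike
`μH[d]`, is continuous along decreasing sequences of compact sets. Hence `H^d_∞ (F_ω)` is the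
infimum over `k` of the content of the `k`-th level set, which depends only on the first `k`
letters of `ω`; so `ω ↦ H^d_∞ (F_ω)` is upper semicontinuous and `{ω | μH[d] (F_ω) = 0}` is a
Gδ. It is dense: `F_ω` is covered by Lipschitz images of `F_{σω}`, so being `μH[d]`-null passes
from any `u` to every word ending in `u`. Intersecting over rational `d` above the infimal
dimension gives a residual set on which `dim_H F_ω` is that infimum. -/

open Function Topology

theorem Set.iInter_iUnion_subset_iUnion_iInter_of_antitone {α ι κ : Type*} [Finite ι]
    [Preorder κ] [IsDirectedOrder κ] [Nonempty κ] {B : ι → κ → Set α}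
    (hB : ∀ i, Antitone (B i)) : ⋂ k, ⋃ i, B i k ⊆ ⋃ i, ⋂ k, B i k := by
  intro x hx
  by_contra h
  simp only [mem_iUnion, mem_iInter, not_exists, not_forall] at h
  choose k hk using h
  obtain ⟨K, hK⟩ := (finite_range k).bddAbove
  obtain ⟨i, hi⟩ := mem_iUnion.1 (mem_iInter.1 hx K)
  exact hk i (hB i (hK (mem_range_self i)) hi)

theorem UpperSemicontinuous.isGδ_setOf_eq_zero {α : Type*} [TopologicalSpace α] {f : α → ℝ≥0∞}
    (hf : UpperSemicontinuous f) : IsGδ {x | f x = 0} := by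
  have : {x | f x = 0} = ⋂ n : ℕ, f ⁻¹' Iio (n : ℝ≥0∞)⁻¹ := by
    ext x
    simp only [mem_ofPred_eq, mem_iInter, mem_preimage, mem_Iio]
    refine ⟨fun h n => by simp [h], fun h => by_contra fun hx => ?_⟩
    obtain ⟨n, hn⟩ := ENNReal.exists_inv_nat_lt hx
    exact (h n).not_gt hn
  rw [this]
  exact .iInter_of_isOpen fun n => hf.isOpen_preimage _

theorem dense_setOf_exists_shift_eq {α : Type*} [TopologicalSpace α] (u : ℕ → α) :
    Dense {ω : ℕ → α | ∃ M, (fun n => ω (n + M)) = u} := by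
  intro x
  refine mem_closure_of_tendsto (f := fun M n => if n < M then x n else u (n - M)) (b := atTop) ?_
    (Eventually.of_forall fun M => ⟨M, funext fun n => by simp⟩)
  refine tendsto_pi_nhds.2 fun n => tendsto_const_nhds.congr' ?_
  filter_upwards [eventually_gt_atTop n] with M hM
  simp [hM]

section HausdorffContent

variable {X : Type*} [EMetricSpace X] {d : ℝ}

/-- The Hausdorff content `H^d_∞`: as `μH[d]`, but with covers of unrestricted diameter. -/
noncomputable def hausdorffContent (d : ℝ) : OuterMeasure X :=
  OuterMeasure.boundedBy fun s => ediam s ^ d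

theorem hausdorffContent_le_ediam_rpow (d : ℝ) (s : Set X) :
    hausdorffContent d s ≤ ediam s ^ d :=
  OuterMeasure.boundedBy_le s

theorem exists_cover_of_hausdorffContent_lt (hd : 0 < d) {s : Set X} {c : ℝ≥0∞}
    (h : hausdorffContent d s < c) :
    ∃ t : ℕ → Set X, s ⊆ ⋃ n, t n ∧ ∑' n, ediam (t n) ^ d < c := by
  rw [hausdorffContent, OuterMeasure.boundedBy_eq_ofFunction (by simp [hd]),
    OuterMeasure.ofFunction_apply] at h
  simpa only [iInf_lt_iff, exists_prop] using h

theorem exists_isOpen_superset_hausdorffContent_le (hd : 0 < d) (s : Set X) {ε : ℝ≥0∞}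
    (hε : 0 < ε) : ∃ U, IsOpen U ∧ s ⊆ U ∧ hausdorffContent d U ≤ ediam s ^ d + ε := by
  rcases eq_top_or_lt_top (ediam s) with hs | hs
  · exact ⟨univ, isOpen_univ, subset_univ s, by simp [hs, ENNReal.top_rpow_of_pos hd]⟩
  have hlim : Tendsto (fun δ : ℝ≥0 => (ediam s + 2 * (δ : ℝ≥0∞)) ^ d) (𝓝[>] 0)
      (𝓝 (ediam s ^ d)) := by
    have : Continuous fun δ : ℝ≥0 => (ediam s + 2 * (δ : ℝ≥0∞)) ^ d :=
      ENNReal.continuous_rpow_const.comp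
        (continuous_const.add ((ENNReal.continuous_const_mul (by norm_num)).comp
          ENNReal.continuous_coe))
    simpa using (this.tendsto 0).mono_left nhdsWithin_le_nhds
  have hlt : ediam s ^ d < ediam s ^ d + ε :=
    ENNReal.lt_add_right (ENNReal.rpow_ne_top_of_nonneg hd.le hs.ne) hε.ne'
  obtain ⟨δ, hδ, hδ0⟩ := ((hlim.eventually_lt_const hlt).and self_mem_nhdsWithin).exists
  refine ⟨thickening δ s, isOpen_thickening, self_subset_thickening (NNReal.coe_pos.2 hδ0) s, ?_⟩
  calc hausdorffContent d (thickening δ s) ≤ ediam (thickening δ s) ^ d :=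
        hausdorffContent_le_ediam_rpow d _
    _ ≤ (ediam s + 2 * δ) ^ d := ENNReal.rpow_le_rpow (ediam_thickening_le δ) hd.le
    _ ≤ ediam s ^ d + ε := hδ.le

/-- A cover of `⋂ i, A i` can be fattened to an open cover at arbitrarily small cost, and by
compactness that open cover already covers some `A i`. -/
theorem hausdorffContent_iInter_of_directed {ι : Type*} [Nonempty ι] (hd : 0 < d)
    {A : ι → Set X} (hdir : Directed (· ⊇ ·) A) (hA : ∀ i, IsCompact (A i)) :
    hausdorffContent d (⋂ i, A i) = ⨅ i, hausdorffContent d (A i) := by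
  refine le_antisymm (le_iInf fun i => measure_mono (iInter_subset A i))
    (le_of_forall_gt fun c hc => ?_)
  obtain ⟨c', hc', hc'c⟩ := exists_between hc
  obtain ⟨t, hcover, hsum⟩ := exists_cover_of_hausdorffContent_lt hd hc'
  obtain ⟨ε, hε, hεsum⟩ := ENNReal.exists_pos_sum_of_countable' (tsub_pos_of_lt hc'c).ne' ℕ
  choose U hUo htU hU using fun n => exists_isOpen_superset_hausdorffContent_le hd (t n) (hε n)
  obtain ⟨i, hi⟩ := exists_subset_nhds_of_isCompact hdir hA fun x hx =>
    (isOpen_iUnion hUo).mem_nhds (iUnion_mono htU (hcover hx))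
  refine iInf_lt_iff.2 ⟨i, ?_⟩
  calc hausdorffContent d (A i) ≤ ∑' n, hausdorffContent d (U n) :=
        (measure_mono hi).trans (measure_iUnion_le U)
    _ ≤ ∑' n, (ediam (t n) ^ d + ε n) := ENNReal.tsum_le_tsum hU
    _ = ∑' n, ediam (t n) ^ d + ∑' n, ε n := ENNReal.tsum_add
    _ < c' + (c - c') := ENNReal.add_lt_add hsum hεsum
    _ = c := add_tsub_cancel_of_le hc'c.le

variable [MeasurableSpace X] [BorelSpace X]

theorem hausdorffContent_le_hausdorffMeasure (d : ℝ) (s : Set X) :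
    hausdorffContent d s ≤ μH[d] s := by
  rw [hausdorffContent, OuterMeasure.boundedBy_apply, Measure.hausdorffMeasure_apply]
  exact le_iSup₂_of_le 1 one_pos (iInf₂_mono fun t _ => le_iInf fun _ => le_rfl)

/-- A cover of total `d`-content `< r ^ d` consists of sets of diameter `< r`. -/
theorem hausdorffContent_eq_zero_iff (hd : 0 < d) {s : Set X} :
    hausdorffContent d s = 0 ↔ μH[d] s = 0 := by
  refine ⟨fun h => ?_, fun h => nonpos_iff_eq_zero.1 (h ▸ hausdorffContent_le_hausdorffMeasure d s)⟩
  rw [Measure.hausdorffMeasure_apply]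
  refine nonpos_iff_eq_zero.1 (iSup₂_le fun r hr => le_of_forall_gt fun c hc => ?_)
  obtain ⟨t, hst, ht⟩ := exists_cover_of_hausdorffContent_lt hd
    (h ▸ lt_min hc (ENNReal.rpow_pos_of_nonneg hr hd.le))
  have hdiam n : ediam (t n) ≤ r := ((ENNReal.rpow_lt_rpow_iff hd).1
    ((ENNReal.le_tsum n).trans_lt (ht.trans_le (min_le_right _ _)))).le
  calc _ ≤ ∑' n, ⨆ _ : (t n).Nonempty, ediam (t n) ^ d := iInf₂_le_of_le t hst (iInf_le _ hdiam)
    _ ≤ ∑' n, ediam (t n) ^ d := ENNReal.tsum_le_tsum fun n => iSup_const_le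
    _ < c := ht.trans_le (min_le_left _ _)

end HausdorffContent

section Attractor

variable {X : Type*} {N : ℕ} {m : Fin N → ℕ} {S : ∀ i, Fin (m i) → X → X} {K₀ : Set X}

theorem levelSets_succ_subset (hK₀ : ∀ i j, MapsTo (S i j) K₀ K₀) (k : ℕ) (ω : ℕ → Fin N) :
    levelSets m S K₀ ω (k + 1) ⊆ levelSets m S K₀ ω k := by
  induction k generalizing ω with
  | zero => exact iUnion_subset fun j => (hK₀ _ j).image_subset
  | succ k ih => exact iUnion_mono fun _ => image_mono (ih _)

theorem antitone_levelSets (hK₀ : ∀ i j, MapsTo (S i j) K₀ K₀) (ω : ℕ → Fin N) :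
    Antitone (levelSets m S K₀ ω) :=
  antitone_nat_of_succ_le fun k => levelSets_succ_subset hK₀ k ω

theorem isCompact_levelSets [TopologicalSpace X] (hK₀ : IsCompact K₀)
    (hS : ∀ i j, Continuous (S i j)) (ω : ℕ → Fin N) (k : ℕ) :
    IsCompact (levelSets m S K₀ ω k) := by
  induction k generalizing ω with
  | zero => exact hK₀
  | succ k ih => exact isCompact_iUnion fun j => (ih _).image (hS _ j)

theorem levelSets_congr {k : ℕ} {ω ω' : ℕ → Fin N} (h : ∀ i < k, ω i = ω' i) :
    levelSets m S K₀ ω k = levelSets m S K₀ ω' k := by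
  induction k generalizing ω ω' with
  | zero => rfl
  | succ k ih =>
    have htail : levelSets m S K₀ (fun n => ω (n + 1)) k =
        levelSets m S K₀ (fun n => ω' (n + 1)) k :=
      ih fun i hi => h (i + 1) (by omega)
    rw [levelSets, levelSets, htail, h 0 k.succ_pos]

theorem isLocallyConstant_levelSets (k : ℕ) :
    IsLocallyConstant fun ω : ℕ → Fin N => levelSets m S K₀ ω k := by
  refine (IsLocallyConstant.iff_eventually_eq _).2 fun ω => ?_
  have hcyl : (Iio k).pi (fun i => {ω i}) ∈ 𝓝 ω :=
    (isOpen_set_pi (finite_Iio k) fun i _ => isOpen_discrete _).mem_nhds fun i _ => rfl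
  filter_upwards [hcyl] with ω' hω' using levelSets_congr fun i hi => hω' i hi

theorem attractorOf_subset_iUnion_image (hK₀ : ∀ i j, MapsTo (S i j) K₀ K₀)
    (hinj : ∀ i j, Injective (S i j)) (ω : ℕ → Fin N) :
    attractorOf m S K₀ ω ⊆ ⋃ j, S (ω 0) j '' attractorOf m S K₀ (fun n => ω (n + 1)) :=
  calc attractorOf m S K₀ ω
      ⊆ ⋂ k, ⋃ j, S (ω 0) j '' levelSets m S K₀ (fun n => ω (n + 1)) k :=
        subset_iInter fun k => iInter_subset _ (k + 1)
    _ ⊆ ⋃ j, ⋂ k, S (ω 0) j '' levelSets m S K₀ (fun n => ω (n + 1)) k :=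
        iInter_iUnion_subset_iUnion_iInter_of_antitone fun _ =>
          monotone_image.comp_antitone (antitone_levelSets hK₀ _)
    _ = ⋃ j, S (ω 0) j '' ⋂ k, levelSets m S K₀ (fun n => ω (n + 1)) k :=
        iUnion_congr fun j => ((hinj _ j).injOn.image_iInter_eq).symm

variable [EMetricSpace X] [MeasurableSpace X] [BorelSpace X] {d : ℝ}

theorem hausdorffMeasure_attractorOf_eq_zero_of_shift (hd : 0 ≤ d)
    (hK₀ : ∀ i j, MapsTo (S i j) K₀ K₀) (hinj : ∀ i j, Injective (S i j))
    (hlip : ∀ i j, ∃ L, LipschitzWith L (S i j)) {ω : ℕ → Fin N}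
    (h : μH[d] (attractorOf m S K₀ fun n => ω (n + 1)) = 0) : μH[d] (attractorOf m S K₀ ω) = 0 := by
  refine measure_mono_null (attractorOf_subset_iUnion_image hK₀ hinj ω)
    (measure_iUnion_null fun j => ?_)
  obtain ⟨L, hL⟩ := hlip (ω 0) j
  exact nonpos_iff_eq_zero.1 ((hL.hausdorffMeasure_image_le hd _).trans_eq (by rw [h, mul_zero]))

theorem hausdorffMeasure_attractorOf_eq_zero_of_tail (hd : 0 ≤ d)
    (hK₀ : ∀ i j, MapsTo (S i j) K₀ K₀) (hinj : ∀ i j, Injective (S i j))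
    (hlip : ∀ i j, ∃ L, LipschitzWith L (S i j)) (M : ℕ) {ω : ℕ → Fin N}
    (h : μH[d] (attractorOf m S K₀ fun n => ω (n + M)) = 0) : μH[d] (attractorOf m S K₀ ω) = 0 := by
  induction M generalizing ω with
  | zero => exact h
  | succ M ih => exact hausdorffMeasure_attractorOf_eq_zero_of_shift hd hK₀ hinj hlip (ih h)

theorem isGδ_setOf_hausdorffMeasure_attractorOf_eq_zero (hd : 0 < d) (hK₀c : IsCompact K₀)
    (hK₀ : ∀ i j, MapsTo (S i j) K₀ K₀) (hS : ∀ i j, Continuous (S i j)) :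
    IsGδ {ω | μH[d] (attractorOf m S K₀ ω) = 0} := by
  have hF : (fun ω => hausdorffContent d (attractorOf m S K₀ ω)) =
      fun ω => ⨅ k, hausdorffContent d (levelSets m S K₀ ω k) := funext fun ω =>
    hausdorffContent_iInter_of_directed hd (antitone_levelSets hK₀ ω).directed_ge
      (isCompact_levelSets hK₀c hS ω)
  have husc : UpperSemicontinuous fun ω => hausdorffContent d (attractorOf m S K₀ ω) :=
    hF ▸ upperSemicontinuous_iInf fun k =>
      ((isLocallyConstant_levelSets k).comp _).continuous.upperSemicontinuous
  simpa only [hausdorffContent_eq_zero_iff hd] using husc.isGδ_setOf_eq_zero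

theorem setOf_hausdorffMeasure_attractorOf_eq_zero_mem_residual (hd : 0 < d)
    (hK₀c : IsCompact K₀) (hK₀ : ∀ i j, MapsTo (S i j) K₀ K₀) (hinj : ∀ i j, Injective (S i j))
    (hlip : ∀ i j, ∃ L, LipschitzWith L (S i j)) {u : ℕ → Fin N}
    (hu : μH[d] (attractorOf m S K₀ u) = 0) :
    {ω | μH[d] (attractorOf m S K₀ ω) = 0} ∈ residual (ℕ → Fin N) := by
  refine residual_of_dense_Gδ (isGδ_setOf_hausdorffMeasure_attractorOf_eq_zero hd hK₀c hK₀
    fun i j => let ⟨_, hL⟩ := hlip i j; hL.continuous) ((dense_setOf_exists_shift_eq u).mono ?_)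
  rintro ω ⟨M, hM⟩
  exact hausdorffMeasure_attractorOf_eq_zero_of_tail hd.le hK₀ hinj hlip M (by rwa [hM])

end Attractor

theorem IsBiLipContraction.exists_lipschitzWith {K : Type*} [MetricSpace K] {φ : K → K}
    (h : IsBiLipContraction φ) : ∃ L, LipschitzWith L φ := by
  obtain ⟨_, C, _, _, h⟩ := h
  exact ⟨C.toNNReal, LipschitzWith.of_dist_le_mul fun x y =>
    (h x y).2.trans (mul_le_mul_of_nonneg_right (Real.le_coe_toNNReal C) dist_nonneg)⟩

theorem IsBiLipContraction.injective {K : Type*} [MetricSpace K] {φ : K → K}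
    (h : IsBiLipContraction φ) : Injective φ := by
  obtain ⟨c, _, hc, _, h⟩ := h
  intro x y hxy
  have := (h x y).1
  rw [hxy, dist_self] at this
  exact dist_le_zero.1 (nonpos_of_mul_nonpos_right this hc)

theorem typical_dimH_eq_inf_general {K : Type*} [MetricSpace K] [CompactSpace K]
    {N : ℕ} (m : Fin N → ℕ)
    (S : ∀ i, Fin (m i) → K → K) (hS : ∀ i j, IsBiLipContraction (S i j)) :
    {ω : ℕ → Fin N |
        dimH (attractorOf m S Set.univ ω) = ⨅ u : ℕ → Fin N, dimH (attractorOf m S Set.univ u)} ∈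
      residual (ℕ → Fin N) := by
  borelize K
  set I := ⨅ u : ℕ → Fin N, dimH (attractorOf m S univ u)
  have hnull (q : ℚ) : ∀ᶠ ω in residual (ℕ → Fin N),
      I < (q : ℝ).toNNReal → μH[(q : ℝ).toNNReal] (attractorOf m S univ ω) = 0 := by
    refine eventually_imp_distrib_left.2 fun hq => ?_
    obtain ⟨u, hu⟩ := iInf_lt_iff.1 hq
    exact setOf_hausdorffMeasure_attractorOf_eq_zero_mem_residual
      (NNReal.coe_pos.2 (ENNReal.coe_pos.1 (pos_of_gt hq))) isCompact_univ
      (fun _ _ => mapsTo_univ _ _) (fun i j => (hS i j).injective)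
      (fun i j => (hS i j).exists_lipschitzWith) (hausdorffMeasure_of_dimH_lt hu)
  filter_upwards [eventually_countable_forall.2 hnull] with ω hω
  refine le_antisymm (le_of_not_gt fun hlt => ?_) (iInf_le _ ω)
  obtain ⟨q, -, hIq, hqω⟩ := ENNReal.lt_iff_exists_rat_btwn.1 hlt
  exact (dimH_le_of_hausdorffMeasure_ne_top ((hω q hIq).trans_ne ENNReal.zero_ne_top)).not_gt hqω

/-- The typical Hausdorff dimension of the random attractor is infimal. -/
theorem typical_dimH_eq_inf {K : Type*} [MetricSpace K] [CompactSpace K] [Nonempty K]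
    {N : ℕ} (hN : 0 < N) (m : Fin N → ℕ) (hm : ∀ i, 0 < m i)
    (S : ∀ i, Fin (m i) → K → K) (hS : ∀ i j, IsBiLipContraction (S i j)) :
    {ω : ℕ → Fin N |
        dimH (attractorOf m S Set.univ ω) = ⨅ u : ℕ → Fin N, dimH (attractorOf m S Set.univ u)} ∈
      residual (ℕ → Fin N) :=
  typical_dimH_eq_inf_general m S hS
end

section
/- Suppose the RIFS $\mathbb{I}$ consists of similarity maps on $\mathbb{R}^n$ satisfying the uniform open set condition: there is a nonempty open set $\mathcal{O}$ with $\bigcup_{j \in \mathcal{I}_i} S_{i,j}(\mathcal{O}) \subseteq \mathcal{O}$ disjointly for each $i$. Let $s_{\max} = \max_i s_i$, where $s_i$ solves $\sum_{j \in \mathcal{I}_i} \mathrm{Lip}(S_{i,j})^{s_i} = 1$. Then $\sup_{\omega \in \Omega} \mathcal{P}^{s_{\max}}(F_\omega) < \infty$; in particular $\dim_P F_\omega \leq s_{\max}$ for all $\omega$. -/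
open Metric MeasureTheory Filter Set
open scoped ENNReal NNReal

/-- Packing pre-measure with respect to the gauge `G` (applied to the diameters `2r`
of the balls of a countable centred `δ`-packing), as `δ → 0`. -/
noncomputable def packingPre {K : Type*} [MetricSpace K] (G : ℝ → ℝ) (F : Set K) : ℝ≥0∞ :=
  ⨅ (δ : ℝ) (_ : 0 < δ),
    ⨆ (s : Set ℕ) (c : ℕ → K) (r : ℕ → ℝ)
      (_ : ∀ n ∈ s, c n ∈ F ∧ 0 < r n ∧ 2 * r n ≤ δ)
      (_ : s.PairwiseDisjoint fun n => Metric.closedBall (c n) (r n)),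
      ∑' n : s, ENNReal.ofReal (G (2 * r n))

/-- Packing measure with respect to the gauge `G`. -/
noncomputable def packingMeasure {K : Type*} [MetricSpace K] (G : ℝ → ℝ) (F : Set K) : ℝ≥0∞ :=
  ⨅ (E : ℕ → Set K) (_ : F ⊆ ⋃ n, E n), ∑' n, packingPre G (E n)

/-- Packing dimension, defined from the packing measures `𝒫^s`. -/
noncomputable def packingDim {K : Type*} [MetricSpace K] (F : Set K) : ℝ≥0∞ :=
  ⨆ (s : ℝ) (_ : 0 ≤ s) (_ : packingMeasure (fun t => t ^ s) F = ⊤), ENNReal.ofReal s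

/-!
Let `c > 0` bound the ratios from below and `D ≥ max 1 (diam K₀)`. For a ball `B(x, r)` with
`x ∈ F_ω` and `2r ≤ 1`, cut an address of `x` at the first word `w` with `ρ_w D ≤ r`, where
`ρ_w` is the product of the ratios along `w`: the cylinder of `w` contains `x`, has diameter
`≤ ρ_w diam K₀ ≤ r`, hence lies in the ball, and `ρ_w ≥ c r / D` because one more letter scales
by at least `c`. The cylinders of disjoint balls come from words none of which is a prefix of
another, and for such an antichain `∑ ρ_w^u ≤ 1` as soon as `∑_j ρ_{i,j}^u ≤ 1` for every `i`,
which holds for `u ≥ s_max` since `ρ < 1`. So every centred packing satisfies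
`∑ (2r)^u ≤ (2D/c)^u`, a bound independent of `ω`.
-/

open Topology

section packing

variable {K : Type*} [MetricSpace K] {G : ℝ → ℝ} {F : Set K}

theorem packingPre_empty : packingPre G (∅ : Set K) = 0 := by
  refine le_antisymm ((iInf₂_le 1 one_pos).trans (iSup_le fun s => iSup_le fun c => iSup_le
    fun r => iSup₂_le fun hs _ => ?_)) bot_le
  have : IsEmpty s := ⟨fun n => (hs n n.2).1⟩
  rw [tsum_empty]

theorem packingMeasure_le_packingPre : packingMeasure G F ≤ packingPre G F := by
  classical
  refine (iInf₂_le (fun k => if k = 0 then F else ∅) (subset_iUnion_of_subset 0 (by simp))).trans ?_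
  rw [tsum_eq_single 0 fun k hk => by simp [hk, packingPre_empty]]
  simp

theorem packingPre_le_ofReal {δ C : ℝ} (hδ : 0 < δ) (hG : ∀ t, 0 < t → 0 ≤ G t)
    (h : ∀ (P : Finset ℕ) (c : ℕ → K) (r : ℕ → ℝ), (∀ n ∈ P, c n ∈ F ∧ 0 < r n ∧ 2 * r n ≤ δ) →
      (P : Set ℕ).PairwiseDisjoint (fun n => closedBall (c n) (r n)) →
        ∑ n ∈ P, G (2 * r n) ≤ C) :
    packingPre G F ≤ ENNReal.ofReal C := by
  refine (iInf₂_le δ hδ).trans (iSup_le fun s => iSup_le fun c => iSup_le fun r =>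
    iSup₂_le fun hs hdisj => ?_)
  rw [ENNReal.tsum_eq_iSup_sum]
  refine iSup_le fun T => ?_
  have hTs : ∀ n ∈ T.map (Function.Embedding.subtype _), n ∈ s := by
    simp only [Finset.mem_map, Function.Embedding.coe_subtype]
    rintro _ ⟨n, -, rfl⟩
    exact n.2
  calc ∑ n ∈ T, ENNReal.ofReal (G (2 * r n))
      = ∑ n ∈ T.map (Function.Embedding.subtype _), ENNReal.ofReal (G (2 * r n)) := by
        rw [Finset.sum_map]; rfl
    _ = ENNReal.ofReal (∑ n ∈ T.map (Function.Embedding.subtype _), G (2 * r n)) :=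
        (ENNReal.ofReal_sum_of_nonneg fun n hn => hG _ (by linarith [(hs n (hTs n hn)).2.1])).symm
    _ ≤ ENNReal.ofReal C := ENNReal.ofReal_le_ofReal
        (h _ c r (fun n hn => hs n (hTs n hn)) (hdisj.subset fun n hn => hTs n hn))

theorem packingDim_le_ofReal {s : ℝ}
    (h : ∀ u, s < u → packingMeasure (fun t => t ^ u) F ≠ ⊤) :
    packingDim F ≤ ENNReal.ofReal s :=
  iSup_le fun u => iSup₂_le fun _ hu => ENNReal.ofReal_le_ofReal (not_lt.1 fun hsu => h u hsu hu)

end packing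

theorem exists_le_and_mul_le_of_mul_le_succ {p : ℕ → ℝ} {c r : ℝ} (hc : 0 ≤ c) (h0 : r < p 0)
    (hp : ∀ t, c * p t ≤ p (t + 1)) (hr : ∃ t, p t ≤ r) : ∃ t, p t ≤ r ∧ c * r ≤ p t := by
  classical
  obtain ⟨t, ht⟩ : ∃ t, Nat.find hr = t + 1 :=
    Nat.exists_eq_succ_of_ne_zero fun h => (Nat.find_spec hr).not_gt (h ▸ h0)
  refine ⟨t + 1, ht ▸ Nat.find_spec hr, ?_⟩
  calc c * r ≤ c * p t := mul_le_mul_of_nonneg_left (not_le.1 (Nat.find_min hr (by omega))).le hc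
    _ ≤ p (t + 1) := hp t

theorem Real.nonneg_of_sum_rpow_eq_one {ι : Type*} [Fintype ι] {a : ι → ℝ} {s : ℝ}
    (ha : ∀ j, 0 < a j ∧ a j < 1) (h : ∑ j, a j ^ s = 1) : 0 ≤ s := by
  by_contra! hs
  obtain ⟨j, -, -⟩ := Finset.exists_ne_zero_of_sum_ne_zero (h.trans_ne one_ne_zero)
  have h1 : 1 < a j ^ s := Real.one_lt_rpow_of_pos_of_lt_one_of_neg (ha j).1 (ha j).2 hs
  have h2 : a j ^ s ≤ ∑ j, a j ^ s :=
    Finset.single_le_sum (fun j _ => (Real.rpow_pos_of_pos (ha j).1 s).le) (Finset.mem_univ j)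
  linarith

theorem Finset.sum_eq_sum_image_headI_preimage_cons {α M : Type*} [Inhabited α] [DecidableEq α]
    [AddCommMonoid M] (f : List α → M) {A : Finset (List α)} (hA : [] ∉ A) :
    ∑ w ∈ A, f w = ∑ a ∈ A.image List.headI,
      ∑ v ∈ A.preimage (List.cons a) List.cons_injective.injOn, f (a :: v) := by
  classical
  rw [← Finset.sum_fiberwise_of_maps_to fun w hw => Finset.mem_image_of_mem List.headI hw]
  refine Finset.sum_congr rfl fun a _ => ?_
  rw [Finset.sum_preimage' (List.cons a)]
  refine Finset.sum_congr (Finset.filter_congr fun w hw => ?_) fun _ _ => rfl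
  cases w with
  | nil => exact absurd hw hA
  | cons b v => simp [eq_comm]

namespace RandomIFS

variable {N : ℕ} {m : Fin N → ℕ}

/- A word `w : List ℕ` read along the environment `ω` stands for `S_{ω 0, w₀} ∘ S_{ω 1, w₁} ∘ ⋯`;
a letter `j ≥ m (ω l)` at position `l` is out of range, and such words get weight `0` and an
empty cylinder. -/
def Admissible (m : Fin N → ℕ) : (ℕ → Fin N) → List ℕ → Prop
  | _, [] => True
  | ω, j :: w => j < m (ω 0) ∧ Admissible m (fun n => ω (n + 1)) w

def letterWeight (g : ∀ i, Fin (m i) → ℝ) (i : Fin N) (j : ℕ) : ℝ :=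
  if h : j < m i then g i ⟨j, h⟩ else 0

def weight (g : ∀ i, Fin (m i) → ℝ) : (ℕ → Fin N) → List ℕ → ℝ
  | _, [] => 1
  | ω, j :: w => letterWeight g (ω 0) j * weight g (fun n => ω (n + 1)) w

theorem Admissible.take : ∀ {ω : ℕ → Fin N} {w : List ℕ}, Admissible m ω w →
    ∀ t, Admissible m ω (w.take t)
  | _, [], _, _ => by simp [Admissible]
  | _, _ :: _, _, 0 => trivial
  | _, _ :: _, ⟨hj, hw⟩, t + 1 => ⟨hj, hw.take t⟩

section weight

variable {g : ∀ i, Fin (m i) → ℝ}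

theorem letterWeight_of_lt {i : Fin N} {j : ℕ} (h : j < m i) :
    letterWeight g i j = g i ⟨j, h⟩ :=
  dif_pos h

theorem letterWeight_nonneg (hg : ∀ i j, 0 ≤ g i j) (i : Fin N) (j : ℕ) :
    0 ≤ letterWeight g i j := by
  unfold letterWeight
  split_ifs
  exacts [hg _ _, le_rfl]

theorem sum_letterWeight_le (hg : ∀ i j, 0 ≤ g i j) (i : Fin N) (T : Finset ℕ) :
    ∑ j ∈ T, letterWeight g i j ≤ ∑ j, g i j := by
  calc ∑ j ∈ T, letterWeight g i j ≤ ∑ j ∈ T ∪ Finset.range (m i), letterWeight g i j :=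
        Finset.sum_le_sum_of_subset_of_nonneg Finset.subset_union_left
          fun j _ _ => letterWeight_nonneg hg i j
    _ = ∑ j ∈ Finset.range (m i), letterWeight g i j :=
        (Finset.sum_subset Finset.subset_union_right fun j _ hj =>
          dif_neg (mt Finset.mem_range.2 hj)).symm
    _ = ∑ j, g i j := by
        rw [← Fin.sum_univ_eq_sum_range]
        exact Finset.sum_congr rfl fun j _ => letterWeight_of_lt j.2

theorem weight_nonneg (hg : ∀ i j, 0 ≤ g i j) : ∀ (ω : ℕ → Fin N) (w : List ℕ),
    0 ≤ weight g ω w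
  | _, [] => zero_le_one
  | _, _ :: w => mul_nonneg (letterWeight_nonneg hg _ _) (weight_nonneg hg _ w)

theorem weight_rpow (hg : ∀ i j, 0 ≤ g i j) (u : ℝ) : ∀ {ω : ℕ → Fin N} {w : List ℕ},
    Admissible m ω w → weight (fun i j => g i j ^ u) ω w = weight g ω w ^ u
  | _, [], _ => by simp [weight]
  | _, _ :: _, ⟨hj, hw⟩ => by
    rw [weight, weight, letterWeight_of_lt hj, letterWeight_of_lt hj, weight_rpow hg u hw,
      Real.mul_rpow (hg _ _) (weight_nonneg hg _ _)]

theorem weight_le_pow {R : ℝ} (hg : ∀ i j, 0 ≤ g i j) (hgR : ∀ i j, g i j ≤ R) :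
    ∀ {ω : ℕ → Fin N} {w : List ℕ}, Admissible m ω w → weight g ω w ≤ R ^ w.length
  | _, [], _ => by simp [weight]
  | ω, j :: _, ⟨hj, hw⟩ => by
    rw [weight, letterWeight_of_lt hj, List.length_cons, pow_succ']
    exact mul_le_mul (hgR _ _) (weight_le_pow hg hgR hw) (weight_nonneg hg _ _)
      ((hg (ω 0) ⟨j, hj⟩).trans (hgR _ _))

theorem mul_weight_take_le_weight_take_succ {c : ℝ} (hg : ∀ i j, 0 ≤ g i j) (hc : c ≤ 1)
    (hcg : ∀ i j, c ≤ g i j) : ∀ {ω : ℕ → Fin N} {w : List ℕ}, Admissible m ω w →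
      ∀ t, c * weight g ω (w.take t) ≤ weight g ω (w.take (t + 1))
  | _, [], _, _ => by simpa [weight] using hc
  | _, _ :: _, ⟨hj, _⟩, 0 => by simpa [weight, letterWeight_of_lt hj] using hcg _ _
  | _, _ :: _, ⟨_, hw⟩, t + 1 => by
    simp only [List.take_succ_cons, weight]
    rw [mul_left_comm]
    exact mul_le_mul_of_nonneg_left (mul_weight_take_le_weight_take_succ hg hc hcg hw t)
      (letterWeight_nonneg hg _ _)

theorem sum_weight_le_one_of_isAntichain (hg : ∀ i j, 0 ≤ g i j) (hg1 : ∀ i, ∑ j, g i j ≤ 1)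
    (ω : ℕ → Fin N) {A : Finset (List ℕ)} (hA : IsAntichain (· <+: ·) (A : Set (List ℕ))) :
    ∑ w ∈ A, weight g ω w ≤ 1 := by
  suffices ∀ (L : ℕ) (ω : ℕ → Fin N) (A : Finset (List ℕ)), (∀ w ∈ A, w.length ≤ L) →
      IsAntichain (· <+: ·) (A : Set (List ℕ)) → ∑ w ∈ A, weight g ω w ≤ 1 from
    this _ ω A (fun w => Finset.le_sup (f := List.length)) hA
  intro L
  induction L with
  | zero =>
    intro ω A hL _
    have hA : A ⊆ {[]} := fun w hw => by simpa using hL w hw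
    calc ∑ w ∈ A, weight g ω w ≤ ∑ w ∈ {[]}, weight g ω w :=
          Finset.sum_le_sum_of_subset_of_nonneg hA fun w _ _ => weight_nonneg hg ω w
      _ = 1 := by simp [weight]
  | succ L ih =>
    intro ω A hL hA
    by_cases hnil : [] ∈ A
    · rw [Finset.eq_singleton_iff_unique_mem.2
        ⟨hnil, fun w hw => (hA.eq hnil hw List.nil_prefix).symm⟩]
      simp [weight]
    rw [Finset.sum_eq_sum_image_headI_preimage_cons _ hnil]
    calc _ ≤ ∑ j ∈ A.image List.headI, letterWeight g (ω 0) j := by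
          refine Finset.sum_le_sum fun j _ => ?_
          simp only [weight, ← Finset.mul_sum]
          refine mul_le_of_le_one_right (letterWeight_nonneg hg _ _) (ih _ _ (fun v hv => ?_) ?_)
          · simpa using hL _ (Finset.mem_preimage.1 hv)
          · rw [Finset.coe_preimage]
            exact hA.preimage List.cons_injective fun _ _ h => List.cons_prefix_cons.2 ⟨rfl, h⟩
      _ ≤ 1 := (sum_letterWeight_le hg _ _).trans (hg1 _)

end weight

section cylinder

variable {X : Type*} {S : ∀ i, Fin (m i) → X → X} {K₀ : Set X}

def cylinder (S : ∀ i, Fin (m i) → X → X) (K₀ : Set X) : (ℕ → Fin N) → List ℕ → Set X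
  | _, [] => K₀
  | ω, j :: w =>
    if h : j < m (ω 0) then S (ω 0) ⟨j, h⟩ '' cylinder S K₀ (fun n => ω (n + 1)) w else ∅

theorem cylinder_subset (hK₀ : ∀ i j, S i j '' K₀ ⊆ K₀) :
    ∀ (ω : ℕ → Fin N) (w : List ℕ), cylinder S K₀ ω w ⊆ K₀
  | _, [] => subset_rfl
  | _, _ :: w => by
    rw [cylinder]
    split_ifs
    exacts [(image_mono (cylinder_subset hK₀ _ w)).trans (hK₀ _ _), empty_subset _]

theorem cylinder_append_subset (hK₀ : ∀ i j, S i j '' K₀ ⊆ K₀) :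
    ∀ (ω : ℕ → Fin N) (v w : List ℕ), cylinder S K₀ ω (v ++ w) ⊆ cylinder S K₀ ω v
  | ω, [], w => cylinder_subset hK₀ ω w
  | _, _ :: v, w => by
    rw [List.cons_append, cylinder, cylinder]
    split_ifs
    exacts [image_mono (cylinder_append_subset hK₀ _ v w), subset_rfl]

theorem cylinder_subset_of_prefix (hK₀ : ∀ i j, S i j '' K₀ ⊆ K₀) {ω : ℕ → Fin N}
    {v w : List ℕ} (h : v <+: w) : cylinder S K₀ ω w ⊆ cylinder S K₀ ω v := by
  obtain ⟨t, rfl⟩ := h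
  exact cylinder_append_subset hK₀ ω v t

theorem exists_mem_cylinder_of_mem_levelSets : ∀ {ω : ℕ → Fin N} {k : ℕ} {x : X},
    x ∈ levelSets m S K₀ ω k →
      ∃ w : List ℕ, w.length = k ∧ Admissible m ω w ∧ x ∈ cylinder S K₀ ω w
  | _, 0, _, hx => ⟨[], rfl, trivial, hx⟩
  | _, _ + 1, _, hx => by
    obtain ⟨j, y, hy, rfl⟩ := mem_iUnion.1 hx
    obtain ⟨w, rfl, hw, hyw⟩ := exists_mem_cylinder_of_mem_levelSets hy
    refine ⟨j :: w, rfl, ⟨j.2, hw⟩, ?_⟩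
    rw [cylinder, dif_pos j.2]
    exact mem_image_of_mem _ hyw

theorem diam_cylinder_le [MetricSpace X] {ρ : ∀ i, Fin (m i) → ℝ} (hρ : ∀ i j, 0 ≤ ρ i j)
    (hS : ∀ i j x y, dist (S i j x) (S i j y) ≤ ρ i j * dist x y) (hK₀b : Bornology.IsBounded K₀)
    (hK₀ : ∀ i j, S i j '' K₀ ⊆ K₀) :
    ∀ (ω : ℕ → Fin N) (w : List ℕ), diam (cylinder S K₀ ω w) ≤ weight ρ ω w * diam K₀
  | _, [] => by simp [cylinder, weight]
  | ω, j :: w => by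
    rw [cylinder, weight, letterWeight]
    split_ifs with hj
    · calc _ ≤ ρ (ω 0) ⟨j, hj⟩ * diam (cylinder S K₀ (fun n => ω (n + 1)) w) :=
            (LipschitzWith.of_dist_le_mul (K := ⟨_, hρ _ _⟩) (hS _ _)).diam_image_le _
              (hK₀b.subset (cylinder_subset hK₀ _ _))
        _ ≤ ρ (ω 0) ⟨j, hj⟩ * (weight ρ (fun n => ω (n + 1)) w * diam K₀) :=
            mul_le_mul_of_nonneg_left (diam_cylinder_le hρ hS hK₀b hK₀ _ w) (hρ _ _)
        _ = _ := (mul_assoc _ _ _).symm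
    · simp

end cylinder

section attractor

variable {X : Type*} [MetricSpace X] {S : ∀ i, Fin (m i) → X → X} {K₀ : Set X}
  {ρ : ∀ i, Fin (m i) → ℝ}

theorem exists_cylinder_subset_closedBall {c D r : ℝ} (hc : 0 < c) (hc1 : c ≤ 1)
    (hcρ : ∀ i j, c ≤ ρ i j) (hρ1 : ∀ i j, ρ i j < 1)
    (hS : ∀ i j x y, dist (S i j x) (S i j y) ≤ ρ i j * dist x y) (hK₀b : Bornology.IsBounded K₀)
    (hK₀ : ∀ i j, S i j '' K₀ ⊆ K₀) (hD : diam K₀ ≤ D) (hr : 0 < r) (hrD : r < D)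
    {ω : ℕ → Fin N} {x : X} (hx : x ∈ attractorOf m S K₀ ω) :
    ∃ w, Admissible m ω w ∧ x ∈ cylinder S K₀ ω w ∧ cylinder S K₀ ω w ⊆ closedBall x r ∧
      c * r ≤ weight ρ ω w * D := by
  have hρ0 : ∀ i j, 0 ≤ ρ i j := fun i j => hc.le.trans (hcρ i j)
  have hD0 : 0 < D := hr.trans hrD
  obtain ⟨R, hρR, hR⟩ : ∃ R, (∀ i j, ρ i j < R) ∧ R < 1 :=
    ((eventually_all.2 fun i => eventually_all.2 fun j =>
      eventually_nhdsWithin_of_eventually_nhds (eventually_gt_nhds (hρ1 i j))).and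
      self_mem_nhdsWithin).exists (f := 𝓝[<] (1 : ℝ))
  obtain ⟨k, hk⟩ := exists_pow_lt_of_lt_one (div_pos hr hD0) hR
  obtain ⟨w₀, rfl, hw₀, hxw₀⟩ := exists_mem_cylinder_of_mem_levelSets (mem_iInter.1 hx k)
  have hdeep : weight ρ ω (w₀.take w₀.length) * D ≤ r := by
    rw [List.take_length]
    calc weight ρ ω w₀ * D ≤ R ^ w₀.length * D :=
          mul_le_mul_of_nonneg_right (weight_le_pow hρ0 (fun i j => (hρR i j).le) hw₀) hD0.le
      _ ≤ r := ((lt_div_iff₀ hD0).1 hk).le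
  obtain ⟨t, hle, hge⟩ := exists_le_and_mul_le_of_mul_le_succ
    (p := fun t => weight ρ ω (w₀.take t) * D) hc.le (by simpa [weight] using hrD)
    (fun t => by
      simpa only [mul_assoc] using mul_le_mul_of_nonneg_right
        (mul_weight_take_le_weight_take_succ hρ0 hc1 hcρ hw₀ t) hD0.le) ⟨_, hdeep⟩
  have hxt : x ∈ cylinder S K₀ ω (w₀.take t) :=
    cylinder_subset_of_prefix hK₀ (List.take_prefix t w₀) hxw₀
  refine ⟨_, hw₀.take t, hxt, fun y hy => ?_, hge⟩
  calc dist y x ≤ diam (cylinder S K₀ ω (w₀.take t)) :=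
        dist_le_diam_of_mem (hK₀b.subset (cylinder_subset hK₀ _ _)) hy hxt
    _ ≤ weight ρ ω (w₀.take t) * diam K₀ := diam_cylinder_le hρ0 hS hK₀b hK₀ _ _
    _ ≤ weight ρ ω (w₀.take t) * D := mul_le_mul_of_nonneg_left hD (weight_nonneg hρ0 _ _)
    _ ≤ r := hle

theorem sum_rpow_le_of_pairwiseDisjoint {c D u : ℝ} (hc : 0 < c) (hc1 : c ≤ 1)
    (hcρ : ∀ i j, c ≤ ρ i j) (hρ1 : ∀ i j, ρ i j < 1)
    (hS : ∀ i j x y, dist (S i j x) (S i j y) ≤ ρ i j * dist x y) (hK₀b : Bornology.IsBounded K₀)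
    (hK₀ : ∀ i j, S i j '' K₀ ⊆ K₀) (hD : diam K₀ ≤ D) (hu : 0 ≤ u)
    (hρu : ∀ i, ∑ j, ρ i j ^ u ≤ 1) {ω : ℕ → Fin N} {P : Finset ℕ} {x : ℕ → X} {r : ℕ → ℝ}
    (hP : ∀ n ∈ P, x n ∈ attractorOf m S K₀ ω ∧ 0 < r n ∧ r n < D)
    (hdisj : (P : Set ℕ).PairwiseDisjoint fun n => closedBall (x n) (r n)) :
    ∑ n ∈ P, (c * r n) ^ u ≤ D ^ u := by
  have hρ0 : ∀ i j, 0 ≤ ρ i j := fun i j => hc.le.trans (hcρ i j)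
  choose! w hw using fun n hn => exists_cylinder_subset_closedBall hc hc1 hcρ hρ1 hS hK₀b hK₀ hD
    (hP n hn).2.1 (hP n hn).2.2 (hP n hn).1
  -- `x n'` lies in the balls around `x n'` and, through the nested cylinders, around `x n`
  have hprefix : ∀ n ∈ P, ∀ n' ∈ P, w n <+: w n' → n = n' := fun n hn n' hn' h => by
    by_contra hne
    exact disjoint_left.1 (hdisj hn hn' hne)
      ((hw n hn).2.2.1 (cylinder_subset_of_prefix hK₀ h (hw n' hn').2.1))
      (mem_closedBall_self (hP n' hn').2.1.le)
  have hanti : IsAntichain (· <+: ·) (P.image w : Set (List ℕ)) := by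
    rw [Finset.coe_image]
    rintro _ ⟨n, hn, rfl⟩ _ ⟨n', hn', rfl⟩ hne h
    exact hne (congrArg w (hprefix n hn n' hn' h))
  have hD0 : 0 ≤ D := diam_nonneg.trans hD
  calc ∑ n ∈ P, (c * r n) ^ u ≤ ∑ n ∈ P, D ^ u * weight (fun i j => ρ i j ^ u) ω (w n) := by
        refine Finset.sum_le_sum fun n hn => ?_
        calc (c * r n) ^ u ≤ (weight ρ ω (w n) * D) ^ u :=
              Real.rpow_le_rpow (mul_nonneg hc.le (hP n hn).2.1.le) (hw n hn).2.2.2 hu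
          _ = D ^ u * weight (fun i j => ρ i j ^ u) ω (w n) := by
              rw [Real.mul_rpow (weight_nonneg hρ0 _ _) hD0, weight_rpow hρ0 u (hw n hn).1,
                mul_comm]
    _ = D ^ u * ∑ v ∈ P.image w, weight (fun i j => ρ i j ^ u) ω v := by
        rw [Finset.sum_image fun n hn n' hn' h => hprefix n hn n' hn' (by rw [h]),
          Finset.mul_sum]
    _ ≤ D ^ u := mul_le_of_le_one_right (Real.rpow_nonneg hD0 u)
        (sum_weight_le_one_of_isAntichain (fun i j => Real.rpow_nonneg (hρ0 i j) u) hρu ω hanti)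

theorem exists_forall_packingMeasure_attractorOf_le (hρ : ∀ i j, 0 < ρ i j ∧ ρ i j < 1)
    (hS : ∀ i j x y, dist (S i j x) (S i j y) ≤ ρ i j * dist x y) (hK₀b : Bornology.IsBounded K₀)
    (hK₀ : ∀ i j, S i j '' K₀ ⊆ K₀) {u : ℝ} (hu : 0 ≤ u) (hρu : ∀ i, ∑ j, ρ i j ^ u ≤ 1) :
    ∃ C, ∀ ω : ℕ → Fin N,
      packingMeasure (fun t => t ^ u) (attractorOf m S K₀ ω) ≤ ENNReal.ofReal C := by
  obtain ⟨c, hcρ, hc1, hc⟩ : ∃ c, (∀ i j, c < ρ i j) ∧ c < 1 ∧ 0 < c :=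
    ((eventually_all.2 fun i => eventually_all.2 fun j =>
      eventually_nhdsWithin_of_eventually_nhds (eventually_lt_nhds (hρ i j).1)).and
      ((eventually_nhdsWithin_of_eventually_nhds (eventually_lt_nhds one_pos)).and
        self_mem_nhdsWithin)).exists (f := 𝓝[>] (0 : ℝ))
  set D := max 1 (diam K₀)
  refine ⟨(2 / c) ^ u * D ^ u, fun ω => packingMeasure_le_packingPre.trans
    (packingPre_le_ofReal one_pos (fun t ht => Real.rpow_nonneg ht.le u)
      fun P x r hP hdisj => ?_)⟩
  have hsum := sum_rpow_le_of_pairwiseDisjoint hc hc1.le (fun i j => (hcρ i j).le)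
    (fun i j => (hρ i j).2) hS hK₀b hK₀ (le_max_right 1 _) hu hρu
    (fun n hn => ⟨(hP n hn).1, (hP n hn).2.1, by linarith [(hP n hn).2.2, le_max_left 1 (diam K₀)]⟩)
    hdisj
  calc ∑ n ∈ P, (2 * r n) ^ u = (2 / c) ^ u * ∑ n ∈ P, (c * r n) ^ u := by
        rw [Finset.mul_sum]
        refine Finset.sum_congr rfl fun n hn => ?_
        rw [← Real.mul_rpow (by positivity) (mul_nonneg hc.le (hP n hn).2.1.le)]
        field_simp
    _ ≤ (2 / c) ^ u * D ^ u := mul_le_mul_of_nonneg_left hsum (by positivity)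

end attractor

end RandomIFS

theorem packingMeasure_smax_bounded_general (n : ℕ) {N : ℕ}
    (m : Fin N → ℕ)
    (S : ∀ i, Fin (m i) → EuclideanSpace ℝ (Fin n) → EuclideanSpace ℝ (Fin n))
    (ρ : ∀ i, Fin (m i) → ℝ) (hρ : ∀ i j, 0 < ρ i j ∧ ρ i j < 1)
    (hsim : ∀ i j x y, dist (S i j x) (S i j y) = ρ i j * dist x y)
    (K₀ : Set (EuclideanSpace ℝ (Fin n))) (hK₀c : IsCompact K₀)
    (hK₀inv : ∀ i j, S i j '' K₀ ⊆ K₀)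
    (s : Fin N → ℝ) (hs : ∀ i, ∑ j, ρ i j ^ s i = 1)
    (smax : ℝ) (hsmax : IsGreatest (Set.range s) smax) :
    (⨆ ω : ℕ → Fin N, packingMeasure (fun t => t ^ smax) (attractorOf m S K₀ ω)) < ⊤ ∧
      ∀ ω : ℕ → Fin N, packingDim (attractorOf m S K₀ ω) ≤ ENNReal.ofReal smax := by
  have hsmax0 : 0 ≤ smax := by
    obtain ⟨i, rfl⟩ := hsmax.1
    exact Real.nonneg_of_sum_rpow_eq_one (hρ i) (hs i)
  have hbound : ∀ u, smax ≤ u → ∃ C, ∀ ω : ℕ → Fin N,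
      packingMeasure (fun t => t ^ u) (attractorOf m S K₀ ω) ≤ ENNReal.ofReal C :=
    fun u hu => RandomIFS.exists_forall_packingMeasure_attractorOf_le hρ
      (fun i j x y => (hsim i j x y).le) hK₀c.isBounded hK₀inv (hsmax0.trans hu) fun i =>
        (Finset.sum_le_sum fun j _ => Real.rpow_le_rpow_of_exponent_ge (hρ i j).1 (hρ i j).2.le
          ((hsmax.2 ⟨i, rfl⟩).trans hu)).trans_eq (hs i)
  obtain ⟨C, hC⟩ := hbound smax le_rfl
  refine ⟨(iSup_le hC).trans_lt ENNReal.ofReal_lt_top,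
    fun ω => packingDim_le_ofReal fun u hu => ?_⟩
  obtain ⟨C', hC'⟩ := hbound u hu.le
  exact ((hC' ω).trans_lt ENNReal.ofReal_lt_top).ne

/-- For a RIFS of contracting similarities on `ℝⁿ` satisfying the uniform open set
condition, `sup_ω 𝒫^{s_max}(F_ω) < ∞`; in particular `dim_P F_ω ≤ s_max` for all `ω`. -/
theorem packingMeasure_smax_bounded (n : ℕ) {N : ℕ} (hN : 0 < N)
    (m : Fin N → ℕ) (hm : ∀ i, 0 < m i)
    (S : ∀ i, Fin (m i) → EuclideanSpace ℝ (Fin n) → EuclideanSpace ℝ (Fin n))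
    (ρ : ∀ i, Fin (m i) → ℝ) (hρ : ∀ i j, 0 < ρ i j ∧ ρ i j < 1)
    (hsim : ∀ i j x y, dist (S i j x) (S i j y) = ρ i j * dist x y)
    (O : Set (EuclideanSpace ℝ (Fin n))) (hOne : O.Nonempty) (hOopen : IsOpen O)
    (hOsub : ∀ i j, S i j '' O ⊆ O)
    (hOdisj : ∀ i, Pairwise fun j j' : Fin (m i) => Disjoint (S i j '' O) (S i j' '' O))
    (K₀ : Set (EuclideanSpace ℝ (Fin n))) (hK₀c : IsCompact K₀) (hK₀ne : K₀.Nonempty)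
    (hK₀inv : ∀ i j, S i j '' K₀ ⊆ K₀)
    (s : Fin N → ℝ) (hs : ∀ i, ∑ j, ρ i j ^ s i = 1)
    (smax : ℝ) (hsmax : IsGreatest (Set.range s) smax) :
    (⨆ ω : ℕ → Fin N, packingMeasure (fun t => t ^ smax) (attractorOf m S K₀ ω)) < ⊤ ∧
      ∀ ω : ℕ → Fin N, packingDim (attractorOf m S K₀ ω) ≤ ENNReal.ofReal smax :=
  packingMeasure_smax_bounded_general n m S ρ hρ hsim K₀ hK₀c hK₀inv s hs smax hsmax
end
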